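/- arXiv:1304.6459 — 3 statements merged into one kernel-verified Lean document; each statement's English description precedes it below -/
import Mathlib

section
/- For every real number φ > 2 and all real numbers γ, β ≥ 0, the quantity G(β, γ, φ, n) := g(β, n)·M(γ, φ, n) + W(γ, φ, n) (the deterministic core of the transport-complexity lower bound for social-multicast) is independent of γ in order and satisfies: G = Θ(n) if β > 2; G = Θ(n·log n) if β = 2; G = Θ(n^{2−β/2}) if 1 < β < 2; G = Θ(n^{3/2}/√(log n)) if β = 1; and G = Θ(n^{3/2}) if 0 ≤ β < 1. -/
/-- `f(n) = Θ(h(n))`: there exist constants `0 < c₁ ≤ c₂` and `N₀` such that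
`c₁·h(n) ≤ f(n) ≤ c₂·h(n)` for all integers `n ≥ N₀`. -/
def IsBigTheta (f h : ℕ → ℝ) : Prop :=
  ∃ c₁ c₂ : ℝ, 0 < c₁ ∧ c₁ ≤ c₂ ∧ ∃ N₀ : ℕ, ∀ n : ℕ, N₀ ≤ n →
    c₁ * h n ≤ f n ∧ f n ≤ c₂ * h n

/-- Zipf normalization `Z(γ, n) = Σ_{j=1}^{n−1} j^{−γ}`. -/
noncomputable def Z (γ : ℝ) (n : ℕ) : ℝ := ∑ j ∈ Finset.Icc 1 (n - 1), (j : ℝ) ^ (-γ)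

/-- `Z_φ(l) = Σ_{m=1}^{l} m^{−φ}`. -/
noncomputable def Zphi (φ : ℝ) (l : ℕ) : ℝ := ∑ m ∈ Finset.Icc 1 l, (m : ℝ) ^ (-φ)

/-- `D₁(φ, l) = Z_φ(l)⁻¹·Σ_{d=1}^{l} d^{1−φ}`. -/
noncomputable def D1 (φ : ℝ) (l : ℕ) : ℝ :=
  (Zphi φ l)⁻¹ * ∑ d ∈ Finset.Icc 1 l, (d : ℝ) ^ (1 - φ)

/-- `D_{1/2}(φ, l) = Z_φ(l)⁻¹·Σ_{d=1}^{l} d^{1/2−φ}`. -/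
noncomputable def Dhalf (φ : ℝ) (l : ℕ) : ℝ :=
  (Zphi φ l)⁻¹ * ∑ d ∈ Finset.Icc 1 l, (d : ℝ) ^ (1 / 2 - φ)

/-- `W(γ, φ, n) = n·Z(γ, n)⁻¹·Σ_{l=1}^{n−1} l^{−γ}·D₁(φ, l)`. -/
noncomputable def W (γ φ : ℝ) (n : ℕ) : ℝ :=
  n * (Z γ n)⁻¹ * ∑ l ∈ Finset.Icc 1 (n - 1), (l : ℝ) ^ (-γ) * D1 φ l

/-- `M(γ, φ, n) = n·Z(γ, n)⁻¹·Σ_{l=1}^{n−1} l^{−γ}·D_{1/2}(φ, l)`. -/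
noncomputable def M (γ φ : ℝ) (n : ℕ) : ℝ :=
  n * (Z γ n)⁻¹ * ∑ l ∈ Finset.Icc 1 (n - 1), (l : ℝ) ^ (-γ) * Dhalf φ l

/-- `g(β, n)`: `1` if `β > 2`; `log n` if `β = 2`; `n^{1−β/2}` if `1 < β < 2`;
`√(n/log n)` if `β = 1`; `√n` if `0 ≤ β < 1`. -/
noncomputable def g (β : ℝ) (n : ℕ) : ℝ :=
  if 2 < β then 1
  else if β = 2 then Real.log n
  else if 1 < β then (n : ℝ) ^ (1 - β / 2)
  else if β = 1 then Real.sqrt ((n : ℝ) / Real.log n)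
  else Real.sqrt n

/-- `G(β, γ, φ, n) = g(β, n)·M(γ, φ, n) + W(γ, φ, n)`, the deterministic core of the
transport-complexity lower bound for social-multicast. -/
noncomputable def G (β γ φ : ℝ) (n : ℕ) : ℝ := g β n * M γ φ n + W γ φ n


section Aux

lemma sum_rpow_bounds {p : ℝ} (hp : p < -1) {l : ℕ} (hl : 1 ≤ l) :
    1 ≤ ∑ d ∈ Finset.Icc 1 l, (d : ℝ) ^ p ∧
    ∑ d ∈ Finset.Icc 1 l, (d : ℝ) ^ p ≤ ∑' d : ℕ, (d : ℝ) ^ p := by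
  have hs : Summable (fun d : ℕ => (d : ℝ) ^ p) := Real.summable_nat_rpow.mpr hp
  have hnn : ∀ d : ℕ, 0 ≤ (d : ℝ) ^ p := fun d => Real.rpow_nonneg (Nat.cast_nonneg d) p
  constructor
  · have h1 : ((1:ℕ) : ℝ) ^ p ≤ ∑ d ∈ Finset.Icc 1 l, (d : ℝ) ^ p :=
      Finset.single_le_sum (f := fun d : ℕ => (d:ℝ)^p) (fun i _ => hnn i)
        (Finset.mem_Icc.mpr ⟨le_refl 1, hl⟩)
    simpa using h1
  · exact Summable.sum_le_tsum _ (fun i _ => hnn i) hs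

lemma one_le_tsum_rpow {p : ℝ} (hp : p < -1) : 1 ≤ ∑' d : ℕ, (d : ℝ) ^ p :=
  le_trans (sum_rpow_bounds hp (le_refl 1)).1 (sum_rpow_bounds hp (le_refl 1)).2

/-- Uniform bounds for `D1` and `Dhalf` when `φ > 2`. -/
lemma D_bounds {φ : ℝ} (hφ : 2 < φ) {l : ℕ} (hl : 1 ≤ l) :
    (∑' d : ℕ, (d : ℝ) ^ (-φ))⁻¹ ≤ D1 φ l ∧ D1 φ l ≤ ∑' d : ℕ, (d : ℝ) ^ (1 - φ) ∧
    (∑' d : ℕ, (d : ℝ) ^ (-φ))⁻¹ ≤ Dhalf φ l ∧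
      Dhalf φ l ≤ ∑' d : ℕ, (d : ℝ) ^ (1 / 2 - φ) := by
  have hp0 : (-φ) < -1 := by linarith
  have hp1 : (1 - φ) < -1 := by linarith
  have hph : (1 / 2 - φ) < -1 := by linarith
  obtain ⟨hZ1, hZ2⟩ := sum_rpow_bounds hp0 hl
  obtain ⟨hS1, hS2⟩ := sum_rpow_bounds hp1 hl
  obtain ⟨hH1, hH2⟩ := sum_rpow_bounds hph hl
  have hT0 : (1:ℝ) ≤ ∑' d : ℕ, (d : ℝ) ^ (-φ) := one_le_tsum_rpow hp0
  have hZpos : (0:ℝ) < Zphi φ l := lt_of_lt_of_le one_pos hZ1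
  have hinv1 : (∑' d : ℕ, (d : ℝ) ^ (-φ))⁻¹ ≤ (Zphi φ l)⁻¹ := by
    apply inv_anti₀ hZpos hZ2
  have hinv2 : (Zphi φ l)⁻¹ ≤ 1 := by
    rw [inv_le_one_iff₀]; right; exact hZ1
  have hinvpos : 0 < (Zphi φ l)⁻¹ := inv_pos.mpr hZpos
  refine ⟨?_, ?_, ?_, ?_⟩
  · have h := mul_le_mul hinv1 hS1 one_pos.le hinvpos.le
    simpa [D1] using h
  · have h := mul_le_mul hinv2 hS2 (le_trans one_pos.le hS1) one_pos.le
    simpa [D1] using h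
  · have h := mul_le_mul hinv1 hH1 one_pos.le hinvpos.le
    simpa [Dhalf] using h
  · have h := mul_le_mul hinv2 hH2 (le_trans one_pos.le hH1) one_pos.le
    simpa [Dhalf] using h

/-- Master lemma: `W` and `M` are both `Θ(n)` with uniform constants. -/
lemma WM_bounds (γ φ : ℝ) (hφ : 2 < φ) :
    ∃ c C : ℝ, 0 < c ∧ c ≤ 1 ∧ 1 ≤ C ∧ ∀ n : ℕ, 2 ≤ n →
      c * n ≤ W γ φ n ∧ W γ φ n ≤ C * n ∧ c * n ≤ M γ φ n ∧ M γ φ n ≤ C * n := by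
  have hp0 : (-φ) < -1 := by linarith
  have hp1 : (1 - φ) < -1 := by linarith
  have hph : (1 / 2 - φ) < -1 := by linarith
  set T0 := ∑' d : ℕ, (d : ℝ) ^ (-φ) with hT0def
  have hT0 : (1:ℝ) ≤ T0 := one_le_tsum_rpow hp0
  set C : ℝ := max (∑' d : ℕ, (d : ℝ) ^ (1 - φ)) (∑' d : ℕ, (d : ℝ) ^ (1 / 2 - φ)) with hCdef
  have hC : (1:ℝ) ≤ C := le_trans (one_le_tsum_rpow hp1) (le_max_left _ _)
  refine ⟨T0⁻¹, C, inv_pos.mpr (lt_of_lt_of_le one_pos hT0), inv_le_one_of_one_le₀ hT0, hC, ?_⟩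
  intro n hn
  have hD : ∀ l ∈ Finset.Icc 1 (n - 1), T0⁻¹ ≤ D1 φ l ∧ D1 φ l ≤ C ∧
      T0⁻¹ ≤ Dhalf φ l ∧ Dhalf φ l ≤ C := by
    intro l hl
    have hl1 : 1 ≤ l := (Finset.mem_Icc.mp hl).1
    obtain ⟨a, b, c', d⟩ := D_bounds hφ hl1
    exact ⟨a, le_trans b (le_max_left _ _), c', le_trans d (le_max_right _ _)⟩
  have hZ1 : (1:ℝ) ≤ Z γ n := by
    have h1 : ((1:ℕ) : ℝ) ^ (-γ) ≤ ∑ j ∈ Finset.Icc 1 (n-1), (j : ℝ) ^ (-γ) :=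
      Finset.single_le_sum (f := fun j : ℕ => (j:ℝ)^(-γ))
        (fun i _ => Real.rpow_nonneg (Nat.cast_nonneg i) _)
        (Finset.mem_Icc.mpr ⟨le_refl 1, by omega⟩)
    simpa [Z] using h1
  have hZpos : (0:ℝ) < Z γ n := lt_of_lt_of_le one_pos hZ1
  have hnZ : (0:ℝ) ≤ (n:ℝ) * (Z γ n)⁻¹ := by positivity
  have key : ∀ (D : ℕ → ℝ), (∀ l ∈ Finset.Icc 1 (n-1), T0⁻¹ ≤ D l ∧ D l ≤ C) →
      T0⁻¹ * n ≤ n * (Z γ n)⁻¹ * ∑ l ∈ Finset.Icc 1 (n - 1), (l : ℝ) ^ (-γ) * D l ∧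
      n * (Z γ n)⁻¹ * ∑ l ∈ Finset.Icc 1 (n - 1), (l : ℝ) ^ (-γ) * D l ≤ C * n := by
    intro D hDb
    have hlow : T0⁻¹ * Z γ n ≤ ∑ l ∈ Finset.Icc 1 (n - 1), (l : ℝ) ^ (-γ) * D l := by
      rw [Z, Finset.mul_sum]
      apply Finset.sum_le_sum
      intro l hl
      rw [mul_comm]
      exact mul_le_mul_of_nonneg_left (hDb l hl).1 (Real.rpow_nonneg (Nat.cast_nonneg l) _)
    have hhigh : ∑ l ∈ Finset.Icc 1 (n - 1), (l : ℝ) ^ (-γ) * D l ≤ C * Z γ n := by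
      rw [Z, Finset.mul_sum]
      apply Finset.sum_le_sum
      intro l hl
      rw [mul_comm C]
      exact mul_le_mul_of_nonneg_left (hDb l hl).2 (Real.rpow_nonneg (Nat.cast_nonneg l) _)
    constructor
    · calc T0⁻¹ * n = n * (Z γ n)⁻¹ * (T0⁻¹ * Z γ n) := by
            field_simp
      _ ≤ _ := mul_le_mul_of_nonneg_left hlow hnZ
    · calc n * (Z γ n)⁻¹ * ∑ l ∈ Finset.Icc 1 (n - 1), (l : ℝ) ^ (-γ) * D l
          ≤ n * (Z γ n)⁻¹ * (C * Z γ n) := mul_le_mul_of_nonneg_left hhigh hnZ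
      _ = C * n := by field_simp
  obtain ⟨w1, w2⟩ := key (D1 φ) (fun l hl => ⟨(hD l hl).1, (hD l hl).2.1⟩)
  obtain ⟨m1, m2⟩ := key (Dhalf φ) (fun l hl => ⟨(hD l hl).2.2.1, (hD l hl).2.2.2⟩)
  exact ⟨w1, w2, m1, m2⟩

/-- Generic case combinator. -/
lemma case_aux {c C gv mv wv hv nr : ℝ} (hc : 0 < c) (hcC : c ≤ C)
    (hg : 0 ≤ gv) (hgn : gv * nr = hv) (hn : nr ≤ hv) (hnpos : 0 ≤ nr)
    (hM1 : c * nr ≤ mv) (hM2 : mv ≤ C * nr)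
    (hW1 : c * nr ≤ wv) (hW2 : wv ≤ C * nr) :
    c * hv ≤ gv * mv + wv ∧ gv * mv + wv ≤ 2 * C * hv := by
  have hC : 0 ≤ C := le_trans hc.le hcC
  have h1 : gv * (c * nr) ≤ gv * mv := mul_le_mul_of_nonneg_left hM1 hg
  have h2 : gv * mv ≤ gv * (C * nr) := mul_le_mul_of_nonneg_left hM2 hg
  have h3 : 0 ≤ wv := le_trans (by positivity) hW1
  have h4 : C * nr ≤ C * hv := mul_le_mul_of_nonneg_left hn hC
  constructor
  · nlinarith [hgn]
  · nlinarith [hgn]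

end Aux

theorem social_multicast_order_phi_gt_two (γ β φ : ℝ) (hγ : 0 ≤ γ) (hβ : 0 ≤ β)
    (hφ : 2 < φ) :
    (2 < β → IsBigTheta (fun n => G β γ φ n) (fun n => (n : ℝ))) ∧
    (β = 2 → IsBigTheta (fun n => G β γ φ n) (fun n => (n : ℝ) * Real.log n)) ∧
    (1 < β ∧ β < 2 → IsBigTheta (fun n => G β γ φ n) (fun n => (n : ℝ) ^ (2 - β / 2))) ∧
    (β = 1 → IsBigTheta (fun n => G β γ φ n)
      (fun n => (n : ℝ) ^ (3 / 2 : ℝ) / Real.sqrt (Real.log n))) ∧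
    (β < 1 → IsBigTheta (fun n => G β γ φ n) (fun n => (n : ℝ) ^ (3 / 2 : ℝ))) := by
  obtain ⟨c, C, hc, hc1, hC1, hb⟩ := WM_bounds γ φ hφ
  have hcC : c ≤ C := le_trans hc1 hC1
  refine ⟨?_, ?_, ?_, ?_, ?_⟩
  · -- β > 2
    intro h2β
    refine ⟨c, 2 * C, hc, by linarith, 2, fun n hn => ?_⟩
    obtain ⟨hW1, hW2, hM1, hM2⟩ := hb n hn
    have hg : g β n = 1 := if_pos h2β
    have := case_aux (gv := 1) (hv := (n:ℝ)) hc hcC one_pos.le (one_mul _) le_rfl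
      (Nat.cast_nonneg n) hM1 hM2 hW1 hW2
    simpa [G, hg] using this
  · -- β = 2
    intro hβ2
    refine ⟨c, 2 * C, hc, by linarith, 3, fun n hn => ?_⟩
    obtain ⟨hW1, hW2, hM1, hM2⟩ := hb n (by omega)
    have hg : g β n = Real.log n := by
      rw [g, if_neg (by rw [hβ2]; norm_num), if_pos hβ2]
    have hlog1 : (1:ℝ) ≤ Real.log n := by
      rw [Real.le_log_iff_exp_le (by positivity)]
      calc Real.exp 1 ≤ 2.7182818286 := Real.exp_one_lt_d9.le
      _ ≤ (3:ℝ) := by norm_num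
      _ ≤ (n:ℝ) := by exact_mod_cast hn
    have hlog0 : (0:ℝ) ≤ Real.log n := le_trans one_pos.le hlog1
    have := case_aux (gv := Real.log n) (hv := (n:ℝ) * Real.log n) hc hcC hlog0
      (mul_comm _ _) (le_mul_of_one_le_right (Nat.cast_nonneg n) hlog1)
      (Nat.cast_nonneg n) hM1 hM2 hW1 hW2
    simpa [G, hg] using this
  · -- 1 < β < 2
    rintro ⟨h1β, hβ2⟩
    refine ⟨c, 2 * C, hc, by linarith, 2, fun n hn => ?_⟩
    obtain ⟨hW1, hW2, hM1, hM2⟩ := hb n hn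
    have hn1 : (1:ℝ) ≤ (n:ℝ) := by exact_mod_cast le_trans (by norm_num) hn
    have hnpos : (0:ℝ) < (n:ℝ) := lt_of_lt_of_le one_pos hn1
    have hg : g β n = (n:ℝ) ^ (1 - β / 2) := by
      rw [g, if_neg (by linarith), if_neg (by linarith), if_pos h1β]
    have hgn : (n:ℝ) ^ (1 - β / 2) * (n:ℝ) = (n:ℝ) ^ (2 - β / 2) := by
      rw [show (2 - β / 2) = (1 - β / 2) + 1 by ring, Real.rpow_add hnpos, Real.rpow_one]
    have hnle : (n:ℝ) ≤ (n:ℝ) ^ (2 - β / 2) := by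
      calc (n:ℝ) = (n:ℝ) ^ (1:ℝ) := (Real.rpow_one _).symm
      _ ≤ _ := Real.rpow_le_rpow_of_exponent_le hn1 (by linarith)
    have := case_aux (gv := (n:ℝ) ^ (1 - β / 2)) (hv := (n:ℝ) ^ (2 - β / 2)) hc hcC
      (Real.rpow_nonneg hnpos.le _) hgn hnle (Nat.cast_nonneg n) hM1 hM2 hW1 hW2
    simpa [G, hg] using this
  · -- β = 1
    intro hβ1
    refine ⟨c, 2 * C, hc, by linarith, 3, fun n hn => ?_⟩
    obtain ⟨hW1, hW2, hM1, hM2⟩ := hb n (by omega)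
    have hn1 : (1:ℝ) ≤ (n:ℝ) := by exact_mod_cast le_trans (by norm_num) hn
    have hnpos : (0:ℝ) < (n:ℝ) := lt_of_lt_of_le one_pos hn1
    have hlogpos : (0:ℝ) < Real.log n := Real.log_pos (by exact_mod_cast by omega)
    have hg : g β n = Real.sqrt ((n:ℝ) / Real.log n) := by
      rw [g, if_neg (by linarith), if_neg (by rw [hβ1]; norm_num),
        if_neg (by rw [hβ1]; exact lt_irrefl 1), if_pos hβ1]
    have hsq : Real.sqrt (n:ℝ) * (n:ℝ) = (n:ℝ) ^ (3 / 2 : ℝ) := by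
      rw [show (3 / 2 : ℝ) = 1 / 2 + 1 by norm_num, Real.rpow_add hnpos, Real.rpow_one,
        ← Real.sqrt_eq_rpow]
    have hgn : Real.sqrt ((n:ℝ) / Real.log n) * (n:ℝ)
        = (n:ℝ) ^ (3 / 2 : ℝ) / Real.sqrt (Real.log n) := by
      rw [Real.sqrt_div (Nat.cast_nonneg n), ← hsq]
      ring
    have hnle : (n:ℝ) ≤ (n:ℝ) ^ (3 / 2 : ℝ) / Real.sqrt (Real.log n) := by
      rw [le_div_iff₀ (Real.sqrt_pos.mpr hlogpos), ← hsq]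
      have h1 : Real.sqrt (Real.log n) ≤ Real.sqrt (n:ℝ) :=
        Real.sqrt_le_sqrt (Real.log_le_self (Nat.cast_nonneg n))
      calc (n:ℝ) * Real.sqrt (Real.log n) ≤ (n:ℝ) * Real.sqrt (n:ℝ) :=
            mul_le_mul_of_nonneg_left h1 (Nat.cast_nonneg n)
      _ = Real.sqrt (n:ℝ) * (n:ℝ) := by ring
    have := case_aux (gv := Real.sqrt ((n:ℝ) / Real.log n))
      (hv := (n:ℝ) ^ (3 / 2 : ℝ) / Real.sqrt (Real.log n)) hc hcC
      (Real.sqrt_nonneg _) hgn hnle (Nat.cast_nonneg n) hM1 hM2 hW1 hW2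
    simpa [G, hg] using this
  · -- β < 1
    intro hβ1
    refine ⟨c, 2 * C, hc, by linarith, 2, fun n hn => ?_⟩
    obtain ⟨hW1, hW2, hM1, hM2⟩ := hb n hn
    have hn1 : (1:ℝ) ≤ (n:ℝ) := by exact_mod_cast le_trans (by norm_num) hn
    have hg : g β n = Real.sqrt n := by
      rw [g, if_neg (by linarith), if_neg (by linarith), if_neg (by linarith),
        if_neg (by linarith)]
    have hnpos : (0:ℝ) < (n:ℝ) := lt_of_lt_of_le one_pos hn1
    have hgn : Real.sqrt (n:ℝ) * (n:ℝ) = (n:ℝ) ^ (3 / 2 : ℝ) := by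
      rw [show (3 / 2 : ℝ) = 1 / 2 + 1 by norm_num, Real.rpow_add hnpos, Real.rpow_one,
        ← Real.sqrt_eq_rpow]
    have hnle : (n:ℝ) ≤ (n:ℝ) ^ (3 / 2 : ℝ) := by
      calc (n:ℝ) = (n:ℝ) ^ (1:ℝ) := (Real.rpow_one _).symm
      _ ≤ _ := Real.rpow_le_rpow_of_exponent_le hn1 (by norm_num)
    have := case_aux (gv := Real.sqrt (n:ℝ)) (hv := (n:ℝ) ^ (3 / 2 : ℝ)) hc hcC
      (Real.sqrt_nonneg _) hgn hnle (Nat.cast_nonneg n) hM1 hM2 hW1 hW2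
    simpa [G, hg] using this
end

section
/- For every real numbers φ with 1 < φ < 3/2, β > 2, and γ ≥ 0, the quantity G(β, γ, φ, n) := g(β, n)·M(γ, φ, n) + W(γ, φ, n) satisfies: G = Θ(n) for γ > 3−φ; G = Θ(n·log n) for γ = 3−φ; G = Θ(n^{4−γ−φ}) for 1 < γ < 3−φ; G = Θ(n^{3−φ}/log n) for γ = 1; and G = Θ(n^{3−φ}) for 0 ≤ γ < 1. -/
/-!
Since `β > 2` we have `g = 1`, and `0 ≤ M ≤ W` termwise, so `G ≍ W = n · T(n) / Z(γ, n)`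
with `T(n) = Σ_{l<n} l^{-γ} D₁(φ, l)`. For `1 < φ < 2` the normalization `Z_φ` is bounded and
`Σ_{d ≤ l} d^{1-φ} ≍ l^{2-φ}`, so `D₁(φ, l) ≍ l^{2-φ}` uniformly in `l` and
`T(n) ≍ Σ_{l<n} l^{2-φ-γ}`. Each case then reduces to the three regimes of the power sums
`Σ_{m ≤ N} m^s`: bounded for `s < -1`, `≍ log N` for `s = -1` (harmonic numbers) and
`≍ N^{s+1}` for `s > -1` (comparison with `∫ x^s`).
-/

open Real Finset Filter Asymptotics

noncomputable def powerSum (s : ℝ) (N : ℕ) : ℝ := ∑ m ∈ Icc 1 N, (m : ℝ) ^ s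

section PowerSum

variable {s : ℝ}

lemma powerSum_nonneg (s : ℝ) (N : ℕ) : 0 ≤ powerSum s N := by
  unfold powerSum; positivity

lemma one_le_powerSum (s : ℝ) {N : ℕ} (hN : 1 ≤ N) : 1 ≤ powerSum s N := by
  have h := single_le_sum (f := fun m : ℕ => (m : ℝ) ^ s) (fun m _ => by positivity)
    (left_mem_Icc.mpr hN)
  simpa [powerSum] using h

lemma powerSum_le_powerSum {t : ℝ} (hst : s ≤ t) (N : ℕ) : powerSum s N ≤ powerSum t N :=
  sum_le_sum fun m hm => rpow_le_rpow_of_exponent_le (by exact_mod_cast (mem_Icc.mp hm).1) hst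

lemma powerSum_eq_sum_Ico (s : ℝ) (N : ℕ) :
    powerSum s N = ∑ i ∈ Ico 0 N, ((i + 1 : ℕ) : ℝ) ^ s := by
  rw [powerSum, sum_Ico_add' (fun m : ℕ => (m : ℝ) ^ s), Ico_add_one_right_eq_Icc, zero_add]

lemma powerSum_le_rpow_of_nonneg (hs : 0 ≤ s) (N : ℕ) :
    powerSum s N ≤ (N : ℝ) ^ (s + 1) := by
  have h := sum_le_card_nsmul (Icc 1 N) (fun m : ℕ => (m : ℝ) ^ s) ((N : ℝ) ^ s) fun m hm =>
    rpow_le_rpow (by positivity) (by exact_mod_cast (mem_Icc.mp hm).2) hs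
  rcases N.eq_zero_or_pos with rfl | hN
  · simp only [powerSum, Icc_eq_empty_of_lt one_pos, sum_empty, Nat.cast_zero]
    positivity
  · simpa [powerSum, rpow_add_one (by positivity : (N : ℝ) ≠ 0), mul_comm] using h

lemma rpow_le_powerSum_of_nonpos (hs : s ≤ 0) {N : ℕ} (hN : N ≠ 0) :
    (N : ℝ) ^ (s + 1) ≤ powerSum s N := by
  have h := card_nsmul_le_sum (Icc 1 N) (fun m : ℕ => (m : ℝ) ^ s) ((N : ℝ) ^ s) fun m hm =>
    rpow_le_rpow_of_nonpos (by exact_mod_cast (mem_Icc.mp hm).1)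
      (by exact_mod_cast (mem_Icc.mp hm).2) hs
  simpa [powerSum, rpow_add_one (by positivity : (N : ℝ) ≠ 0), mul_comm] using h

lemma rpow_div_le_powerSum_of_nonneg (hs : 0 ≤ s) (N : ℕ) :
    (N : ℝ) ^ (s + 1) / (s + 1) ≤ powerSum s N := by
  have hmono : MonotoneOn (fun x : ℝ => x ^ s) (Set.Icc ((0 : ℕ) : ℝ) N) :=
    (monotoneOn_rpow_Ici_of_exponent_nonneg hs).mono fun x hx => by
      simpa using hx.1
  calc (N : ℝ) ^ (s + 1) / (s + 1) = ∫ x in ((0 : ℕ) : ℝ)..N, x ^ s := by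
        rw [integral_rpow (Or.inl (by linarith)), Nat.cast_zero,
          zero_rpow (by linarith), sub_zero]
    _ ≤ ∑ i ∈ Ico 0 N, ((i + 1 : ℕ) : ℝ) ^ s := hmono.integral_le_sum_Ico (Nat.zero_le N)
    _ = powerSum s N := (powerSum_eq_sum_Ico s N).symm

lemma powerSum_le_rpow_div_of_nonpos (hs₁ : -1 < s) (hs : s ≤ 0) (N : ℕ) :
    powerSum s N ≤ (N : ℝ) ^ (s + 1) / (s + 1) := by
  rcases N.eq_zero_or_pos with rfl | hN
  · simp [powerSum, zero_rpow (by linarith : s + 1 ≠ 0)]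
  have hanti : AntitoneOn (fun x : ℝ => x ^ s) (Set.Icc ((1 : ℕ) : ℝ) N) :=
    (antitoneOn_rpow_Ioi_of_exponent_nonpos hs).mono fun x hx => by
      simp only [Nat.cast_one, Set.mem_Icc] at hx
      exact lt_of_lt_of_le one_pos hx.1
  have hs1 : 0 < s + 1 := by linarith
  have hNs : 1 ≤ (N : ℝ) ^ (s + 1) := one_le_rpow (by exact_mod_cast hN) hs1.le
  calc powerSum s N = 1 + ∑ i ∈ Ico 1 N, ((i + 1 : ℕ) : ℝ) ^ s := by
        rw [powerSum_eq_sum_Ico, sum_eq_sum_Ico_succ_bot hN]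
        simp
    _ ≤ 1 + ∫ x in ((1 : ℕ) : ℝ)..N, x ^ s := by
        gcongr
        exact hanti.sum_le_integral_Ico hN
    _ = 1 + ((N : ℝ) ^ (s + 1) - 1) / (s + 1) := by
        rw [integral_rpow (Or.inl hs₁), Nat.cast_one, one_rpow]
    _ ≤ (N : ℝ) ^ (s + 1) / (s + 1) := by
        rw [← sub_nonneg]
        field_simp
        nlinarith

lemma exists_powerSum_bounds (hs : -1 < s) :
    ∃ a b : ℝ, 0 < a ∧ ∀ N : ℕ, N ≠ 0 →
      a * (N : ℝ) ^ (s + 1) ≤ powerSum s N ∧ powerSum s N ≤ b * (N : ℝ) ^ (s + 1) := by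
  have hs1 : 0 < s + 1 := by linarith
  rcases le_total 0 s with hs0 | hs0
  · refine ⟨(s + 1)⁻¹, 1, by positivity, fun N _ => ⟨?_, ?_⟩⟩
    · simpa [div_eq_inv_mul] using rpow_div_le_powerSum_of_nonneg hs0 N
    · simpa using powerSum_le_rpow_of_nonneg hs0 N
  · refine ⟨1, (s + 1)⁻¹, one_pos, fun N hN => ⟨?_, ?_⟩⟩
    · simpa using rpow_le_powerSum_of_nonpos hs0 hN
    · simpa [div_eq_inv_mul] using powerSum_le_rpow_div_of_nonpos hs hs0 N

lemma powerSum_le_tsum (hs : s < -1) (N : ℕ) : powerSum s N ≤ ∑' m : ℕ, (m : ℝ) ^ s :=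
  (summable_nat_rpow.mpr hs).sum_le_tsum _ fun m _ => by positivity

lemma powerSum_neg_one (N : ℕ) : powerSum (-1) N = harmonic N := by
  simp [powerSum, harmonic_eq_sum_Icc, rpow_neg_one]

end PowerSum

lemma isTheta_of_le_of_le {α : Type*} {l : Filter α} {f g : α → ℝ} {a b : ℝ} (ha : 0 < a)
    (h : ∀ᶠ x in l, 0 ≤ g x ∧ a * g x ≤ f x ∧ f x ≤ b * g x) : f =Θ[l] g := by
  refine ⟨IsBigO.of_bound b (h.mono fun x hx => ?_),
    IsBigO.of_bound a⁻¹ (h.mono fun x hx => ?_)⟩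
  all_goals
    obtain ⟨hg, hlow, hupp⟩ := hx
    have hf : 0 ≤ f x := le_trans (by positivity) hlow
    rw [norm_of_nonneg hf, norm_of_nonneg hg]
  · exact hupp
  · rwa [inv_mul_eq_div, le_div_iff₀ ha, mul_comm]

lemma IsBigTheta.of_isTheta {f h : ℕ → ℝ} (hfh : f =Θ[atTop] h) (hf : ∀ᶠ n in atTop, 0 ≤ f n)
    (hh : ∀ᶠ n in atTop, 0 ≤ h n) : IsBigTheta f h := by
  obtain ⟨c₂, -, hO⟩ := hfh.1.exists_pos
  obtain ⟨c, hc, hΩ⟩ := hfh.2.exists_pos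
  obtain ⟨N₀, hN₀⟩ := eventually_atTop.mp (hO.bound.and (hΩ.bound.and (hf.and hh)))
  refine ⟨c⁻¹, max c⁻¹ c₂, by positivity, le_max_left _ _, N₀, fun n hn => ?_⟩
  obtain ⟨hupp, hlow, hfn, hhn⟩ := hN₀ n hn
  rw [norm_of_nonneg hfn, norm_of_nonneg hhn] at hupp hlow
  refine ⟨by rwa [inv_mul_le_iff₀ hc], hupp.trans ?_⟩
  exact mul_le_mul_of_nonneg_right (le_max_right _ _) hhn

lemma isEquivalent_natCast_sub_one :
    (fun n : ℕ => ((n - 1 : ℕ) : ℝ)) ~[atTop] fun n => (n : ℝ) := by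
  have hdiff : (fun _ : ℕ => (-1 : ℝ)) =ᶠ[atTop] fun n => ((n - 1 : ℕ) : ℝ) - n := by
    filter_upwards [eventually_ge_atTop 1] with n hn
    push_cast [hn]
    ring
  exact ((isLittleO_const_id_atTop (-1 : ℝ)).comp_tendsto tendsto_natCast_atTop_atTop).congr'
    hdiff EventuallyEq.rfl

section PowerSumAsymptotics

variable {s : ℝ}

lemma isTheta_powerSum_pred_rpow (hs : -1 < s) :
    (fun n => powerSum s (n - 1)) =Θ[atTop] fun n => (n : ℝ) ^ (s + 1) := by
  obtain ⟨a, b, ha, hbounds⟩ := exists_powerSum_bounds hs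
  have hpred : (fun n => powerSum s (n - 1)) =Θ[atTop] fun n => ((n - 1 : ℕ) : ℝ) ^ (s + 1) :=
    isTheta_of_le_of_le ha <| by
      filter_upwards [eventually_ge_atTop 2] with n hn
      exact ⟨by positivity, hbounds (n - 1) (by omega)⟩
  exact hpred.trans (isEquivalent_natCast_sub_one.rpow fun n => by positivity).isTheta

lemma isTheta_powerSum_pred_one (hs : s < -1) :
    (fun n => powerSum s (n - 1)) =Θ[atTop] fun _ => (1 : ℝ) :=
  isTheta_of_le_of_le one_pos <| by
    filter_upwards [eventually_ge_atTop 2] with n hn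
    exact ⟨zero_le_one, by simpa using one_le_powerSum s (by omega : 1 ≤ n - 1),
      by simpa using powerSum_le_tsum hs (n - 1)⟩

lemma isTheta_powerSum_neg_one_pred_log :
    (fun n => powerSum (-1) (n - 1)) =Θ[atTop] fun n => log n :=
  isTheta_of_le_of_le (b := 2) one_pos <| by
    filter_upwards [eventually_ge_atTop 3] with n hn
    have hn' : (3 : ℝ) ≤ n := by exact_mod_cast hn
    have hlog : 1 ≤ log n := by
      rw [le_log_iff_exp_le (by linarith)]
      linarith [exp_one_lt_d9]
    have hlow := log_add_one_le_harmonic (n - 1)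
    have hupp := harmonic_le_one_add_log (n - 1)
    rw [Nat.sub_add_cancel (by omega)] at hlow
    have hmono : log ((n - 1 : ℕ) : ℝ) ≤ log n :=
      log_le_log (by norm_cast; omega) (by exact_mod_cast Nat.sub_le n 1)
    rw [powerSum_neg_one]
    exact ⟨by positivity, by linarith, by linarith⟩

end PowerSumAsymptotics

section Multicast

variable {γ β φ : ℝ}

lemma exists_D1_bounds (hφ₁ : 1 < φ) (hφ₂ : φ < 2) :
    ∃ a b : ℝ, 0 < a ∧ ∀ l : ℕ, l ≠ 0 →
      a * (l : ℝ) ^ (2 - φ) ≤ D1 φ l ∧ D1 φ l ≤ b * (l : ℝ) ^ (2 - φ) := by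
  obtain ⟨a, b, ha, hbounds⟩ := exists_powerSum_bounds (s := 1 - φ) (by linarith)
  set C := ∑' m : ℕ, (m : ℝ) ^ (-φ)
  have hC : 1 ≤ C := (one_le_powerSum (-φ) (N := 1) le_rfl).trans
    (powerSum_le_tsum (by linarith) 1)
  refine ⟨C⁻¹ * a, b, by positivity, fun l hl => ?_⟩
  obtain ⟨hlow, hupp⟩ := hbounds l hl
  rw [show 1 - φ + 1 = 2 - φ by ring] at hlow hupp
  have hZ₁ : 1 ≤ Zphi φ l := one_le_powerSum (-φ) (Nat.one_le_iff_ne_zero.mpr hl)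
  have hZ₂ : Zphi φ l ≤ C := powerSum_le_tsum (by linarith) l
  have hS : 0 ≤ powerSum (1 - φ) l := powerSum_nonneg _ _
  constructor
  · rw [mul_assoc]
    exact mul_le_mul (inv_anti₀ (by linarith) hZ₂) hlow (by positivity) (by positivity)
  · calc D1 φ l ≤ 1 * powerSum (1 - φ) l :=
          mul_le_mul_of_nonneg_right (inv_le_one_of_one_le₀ hZ₁) hS
      _ ≤ b * (l : ℝ) ^ (2 - φ) := by rwa [one_mul]

lemma isTheta_sum_rpow_mul_D1 (hφ₁ : 1 < φ) (hφ₂ : φ < 2) :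
    (fun n : ℕ => ∑ l ∈ Icc 1 (n - 1), (l : ℝ) ^ (-γ) * D1 φ l) =Θ[atTop]
      fun n => powerSum (2 - φ - γ) (n - 1) := by
  obtain ⟨a, b, ha, hD1⟩ := exists_D1_bounds hφ₁ hφ₂
  have hterm : ∀ l : ℕ, 1 ≤ l → a * (l : ℝ) ^ (2 - φ - γ) ≤ (l : ℝ) ^ (-γ) * D1 φ l ∧
      (l : ℝ) ^ (-γ) * D1 φ l ≤ b * (l : ℝ) ^ (2 - φ - γ) := by
    intro l hl
    have hl₀ : l ≠ 0 := Nat.one_le_iff_ne_zero.mp hl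
    have hsplit : (l : ℝ) ^ (2 - φ - γ) = (l : ℝ) ^ (-γ) * (l : ℝ) ^ (2 - φ) := by
      rw [← rpow_add (by positivity)]; ring_nf
    obtain ⟨hlow, hupp⟩ := hD1 l hl₀
    have hγ : 0 ≤ (l : ℝ) ^ (-γ) := by positivity
    rw [hsplit, mul_left_comm a, mul_left_comm b]
    exact ⟨mul_le_mul_of_nonneg_left hlow hγ, mul_le_mul_of_nonneg_left hupp hγ⟩
  refine isTheta_of_le_of_le (b := b) ha <|
    Eventually.of_forall fun n => ⟨powerSum_nonneg _ _, ?_, ?_⟩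
  · rw [powerSum, mul_sum]
    exact sum_le_sum fun l hl => (hterm l (mem_Icc.mp hl).1).1
  · rw [powerSum, mul_sum]
    exact sum_le_sum fun l hl => (hterm l (mem_Icc.mp hl).1).2

lemma isTheta_W (hφ₁ : 1 < φ) (hφ₂ : φ < 2) :
    (fun n => W γ φ n) =Θ[atTop] fun n => n * (Z γ n)⁻¹ * powerSum (2 - φ - γ) (n - 1) :=
  (isTheta_refl (fun n : ℕ => (n : ℝ) * (Z γ n)⁻¹) atTop).mul
    (isTheta_sum_rpow_mul_D1 hφ₁ hφ₂)

lemma W_nonneg (γ φ : ℝ) (n : ℕ) : 0 ≤ W γ φ n := by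
  unfold W Z D1 Zphi; positivity

lemma M_nonneg (γ φ : ℝ) (n : ℕ) : 0 ≤ M γ φ n := by
  unfold M Z Dhalf Zphi; positivity

lemma Dhalf_le_D1 (φ : ℝ) (l : ℕ) : Dhalf φ l ≤ D1 φ l :=
  mul_le_mul_of_nonneg_left (powerSum_le_powerSum (by linarith) l)
    (inv_nonneg.mpr (powerSum_nonneg _ _))

lemma M_le_W (γ φ : ℝ) (n : ℕ) : M γ φ n ≤ W γ φ n := by
  refine mul_le_mul_of_nonneg_left (sum_le_sum fun l _ => ?_) (by unfold Z; positivity)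
  exact mul_le_mul_of_nonneg_left (Dhalf_le_D1 φ l) (by positivity)

lemma G_eq_M_add_W (hβ : 2 < β) (γ φ : ℝ) (n : ℕ) :
    G β γ φ n = M γ φ n + W γ φ n := by
  rw [G, g, if_pos hβ, one_mul]

lemma isTheta_G_W (hβ : 2 < β) :
    (fun n => G β γ φ n) =Θ[atTop] fun n => W γ φ n :=
  isTheta_of_le_of_le (b := 2) one_pos <| Eventually.of_forall fun n => by
    rw [G_eq_M_add_W hβ]
    have := M_le_W γ φ n
    exact ⟨W_nonneg γ φ n, by linarith [M_nonneg γ φ n], by linarith⟩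

lemma isBigTheta_G_of_isTheta (hβ : 2 < β) (hφ₁ : 1 < φ) (hφ₂ : φ < 2) {t z h : ℕ → ℝ}
    (ht : (fun n => powerSum (2 - φ - γ) (n - 1)) =Θ[atTop] t)
    (hz : (fun n => powerSum (-γ) (n - 1)) =Θ[atTop] z)
    (hh : ∀ᶠ n : ℕ in atTop, (n : ℝ) * t n / z n = h n) (h₀ : ∀ᶠ n in atTop, 0 ≤ h n) :
    IsBigTheta (fun n => G β γ φ n) h := by
  have hG : (fun n => G β γ φ n) =Θ[atTop] fun n => (n : ℝ) * (z n)⁻¹ * t n :=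
    (isTheta_G_W hβ).trans <| (isTheta_W hφ₁ hφ₂).trans <|
      ((isTheta_refl (fun n : ℕ => (n : ℝ)) atTop).mul hz.inv).mul ht
  refine IsBigTheta.of_isTheta (hG.trans_eventuallyEq ?_) (Eventually.of_forall fun n => ?_) h₀
  · filter_upwards [hh] with n hn
    rw [← hn, mul_right_comm, div_eq_mul_inv]
  · rw [G_eq_M_add_W hβ]
    exact add_nonneg (M_nonneg γ φ n) (W_nonneg γ φ n)

end Multicast

theorem social_multicast_order_phi_mid_beta_gt_two_general (γ β φ : ℝ)
    (hφ₁ : 1 < φ) (hφ₂ : φ < 3 / 2) (hβ : 2 < β) :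
    (3 - φ < γ → IsBigTheta (fun n => G β γ φ n) (fun n => (n : ℝ))) ∧
    (γ = 3 - φ → IsBigTheta (fun n => G β γ φ n) (fun n => (n : ℝ) * Real.log n)) ∧
    (1 < γ ∧ γ < 3 - φ →
      IsBigTheta (fun n => G β γ φ n) (fun n => (n : ℝ) ^ (4 - γ - φ))) ∧
    (γ = 1 → IsBigTheta (fun n => G β γ φ n) (fun n => (n : ℝ) ^ (3 - φ) / Real.log n)) ∧
    (γ < 1 → IsBigTheta (fun n => G β γ φ n) (fun n => (n : ℝ) ^ (3 - φ))) := by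
  have hφ₂' : φ < 2 := by linarith
  have hpos : ∀ᶠ n : ℕ in atTop, (0 : ℝ) < n :=
    (eventually_gt_atTop 0).mono fun n hn => Nat.cast_pos.mpr hn
  refine ⟨fun hγ => ?_, fun hγ => ?_, fun hγ => ?_, fun hγ => ?_, fun hγ => ?_⟩
  · exact isBigTheta_G_of_isTheta hβ hφ₁ hφ₂' (isTheta_powerSum_pred_one (by linarith))
      (isTheta_powerSum_pred_one (by linarith)) (by simp) (by simp)
  · subst hγ
    refine isBigTheta_G_of_isTheta hβ hφ₁ hφ₂' (t := fun n => log n) ?_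
      (isTheta_powerSum_pred_one (by linarith)) (by simp)
      (Eventually.of_forall fun n => by positivity)
    rw [show 2 - φ - (3 - φ) = -1 by ring]
    exact isTheta_powerSum_neg_one_pred_log
  · refine isBigTheta_G_of_isTheta hβ hφ₁ hφ₂' (isTheta_powerSum_pred_rpow (by linarith))
      (isTheta_powerSum_pred_one (by linarith)) ?_ (Eventually.of_forall fun n => by positivity)
    filter_upwards [hpos] with n hn
    rw [div_one, ← rpow_one_add' hn.le (by linarith)]
    ring_nf
  · subst hγ
    refine isBigTheta_G_of_isTheta hβ hφ₁ hφ₂' (isTheta_powerSum_pred_rpow (by linarith))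
      isTheta_powerSum_neg_one_pred_log ?_ (Eventually.of_forall fun n => by positivity)
    filter_upwards [hpos] with n hn
    rw [← rpow_one_add' hn.le (by linarith)]
    ring_nf
  · refine isBigTheta_G_of_isTheta hβ hφ₁ hφ₂' (isTheta_powerSum_pred_rpow (by linarith))
      (isTheta_powerSum_pred_rpow (by linarith)) ?_ (Eventually.of_forall fun n => by positivity)
    filter_upwards [hpos] with n hn
    rw [← rpow_one_add' hn.le (by linarith), ← rpow_sub hn]
    ring_nf

theorem social_multicast_order_phi_mid_beta_gt_two (γ β φ : ℝ) (hγ : 0 ≤ γ)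
    (hφ₁ : 1 < φ) (hφ₂ : φ < 3 / 2) (hβ : 2 < β) :
    (3 - φ < γ → IsBigTheta (fun n => G β γ φ n) (fun n => (n : ℝ))) ∧
    (γ = 3 - φ → IsBigTheta (fun n => G β γ φ n) (fun n => (n : ℝ) * Real.log n)) ∧
    (1 < γ ∧ γ < 3 - φ →
      IsBigTheta (fun n => G β γ φ n) (fun n => (n : ℝ) ^ (4 - γ - φ))) ∧
    (γ = 1 → IsBigTheta (fun n => G β γ φ n) (fun n => (n : ℝ) ^ (3 - φ) / Real.log n)) ∧
    (γ < 1 → IsBigTheta (fun n => G β γ φ n) (fun n => (n : ℝ) ^ (3 - φ))) :=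
  social_multicast_order_phi_mid_beta_gt_two_general γ β φ hφ₁ hφ₂ hβ
end

section
/- For every real number φ with 0 ≤ φ < 1 and all real numbers γ, β ≥ 0, the social-multicast quantity coincides in order with the social-broadcast quantity: g(β, n)·M(γ, φ, n) + W(γ, φ, n) = Θ(g(β, n)·A(γ, n) + Q(γ, n)); that is, there exist constants 0 < c₁ ≤ c₂ and N₀ such that for all n ≥ N₀, c₁·(g(β, n)·A(γ, n) + Q(γ, n)) ≤ g(β, n)·M(γ, φ, n) + W(γ, φ, n) ≤ c₂·(g(β, n)·A(γ, n) + Q(γ, n)). -/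
/-- `Q(γ, n) = n·Z(γ, n)⁻¹·Σ_{l=1}^{n−1} l^{1−γ}`. -/
noncomputable def Q (γ : ℝ) (n : ℕ) : ℝ :=
  n * (Z γ n)⁻¹ * ∑ l ∈ Finset.Icc 1 (n - 1), (l : ℝ) ^ (1 - γ)

/-- `A(γ, n) = n·Z(γ, n)⁻¹·Σ_{l=1}^{n−1} l^{1/2−γ}`. -/
noncomputable def A (γ : ℝ) (n : ℕ) : ℝ :=
  n * (Z γ n)⁻¹ * ∑ l ∈ Finset.Icc 1 (n - 1), (l : ℝ) ^ (1 / 2 - γ)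


section Helpers
open Finset

noncomputable def Kc (p : ℝ) : ℝ := (p+1) * (2:ℝ)^(-p) + (p+1) + 1

lemma Kc_pos (p : ℝ) (hp : 0 < p + 1) : 1 < Kc p := by
  have h2 : (0:ℝ) < (2:ℝ)^(-p) := Real.rpow_pos_of_pos (by norm_num) _
  unfold Kc; nlinarith

lemma rpow_step_mvt (p : ℝ) (hp : 0 < p + 1) (d : ℕ) (hd : 1 ≤ d) :
    ∃ c ∈ Set.Ioo ((d:ℝ) - 1) d,
      (d:ℝ) ^ (p+1) - ((d:ℝ) - 1) ^ (p+1) = (p+1) * c ^ p := by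
  have hd1 : (1:ℝ) ≤ d := by exact_mod_cast hd
  have hab : (d:ℝ) - 1 < d := by linarith
  have hcont : ContinuousOn (fun x : ℝ => x ^ (p+1)) (Set.Icc ((d:ℝ)-1) d) := fun x hx =>
    (Real.continuousAt_rpow_const x (p+1) (Or.inr hp.le)).continuousWithinAt
  have hderiv : ∀ x ∈ Set.Ioo ((d:ℝ)-1) (d:ℝ),
      HasDerivAt (fun x : ℝ => x ^ (p+1)) ((p+1) * x ^ p) x := by
    intro x hx
    have hx0 : 0 < x := lt_of_le_of_lt (by linarith : (0:ℝ) ≤ (d:ℝ)-1) hx.1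
    have := Real.hasDerivAt_rpow_const (x := x) (p := p+1) (Or.inl hx0.ne')
    simpa [show p+1-1 = p by ring] using this
  obtain ⟨c, hc, hceq⟩ := exists_hasDerivAt_eq_slope (fun x : ℝ => x ^ (p+1))
      (fun x => (p+1) * x ^ p) hab hcont hderiv
  refine ⟨c, hc, ?_⟩
  rw [show (d:ℝ) - ((d:ℝ) - 1) = 1 by ring, div_one] at hceq
  linarith [hceq]

lemma step_lower (p : ℝ) (hp : 0 < p+1) (hp0 : p ≤ 0) (d : ℕ) (hd : 1 ≤ d) :
    (p+1) * (d:ℝ)^p ≤ (d:ℝ)^(p+1) - ((d:ℝ)-1)^(p+1) := by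
  obtain ⟨c, hc, hceq⟩ := rpow_step_mvt p hp d hd
  have hd1 : (1:ℝ) ≤ d := by exact_mod_cast hd
  have hc0 : 0 < c := lt_of_le_of_lt (by linarith : (0:ℝ) ≤ (d:ℝ)-1) hc.1
  have : (d:ℝ)^p ≤ c^p := Real.rpow_le_rpow_of_nonpos hc0 hc.2.le hp0
  rw [hceq]
  nlinarith

lemma step_upper (p : ℝ) (hp : 0 < p+1) (d : ℕ) (hd : 1 ≤ d) :
    (d:ℝ)^(p+1) - ((d:ℝ)-1)^(p+1) ≤ Kc p * (d:ℝ)^p := by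
  obtain ⟨c, hc, hceq⟩ := rpow_step_mvt p hp d hd
  have hd1 : (1:ℝ) ≤ d := by exact_mod_cast hd
  have hc0 : 0 < c := lt_of_le_of_lt (by linarith : (0:ℝ) ≤ (d:ℝ)-1) hc.1
  have hdpow : (0:ℝ) < (d:ℝ)^p := Real.rpow_pos_of_pos (by linarith) _
  have h2 : (0:ℝ) < (2:ℝ)^(-p) := Real.rpow_pos_of_pos (by norm_num) _
  rw [hceq]
  rcases le_or_gt 0 p with h0 | h0
  · have h3 : c^p ≤ (d:ℝ)^p := Real.rpow_le_rpow hc0.le hc.2.le h0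
    have h4 := mul_le_mul_of_nonneg_left h3 hp.le
    unfold Kc; nlinarith [mul_pos h2 hdpow]
  · rcases eq_or_lt_of_le hd with h1 | h1
    · have hd' : (d:ℝ) = 1 := by exact_mod_cast h1.symm
      rw [← hceq, hd', show (1:ℝ)-1 = 0 by ring, Real.zero_rpow hp.ne',
        Real.one_rpow, Real.one_rpow]
      have := Kc_pos p hp; linarith
    · have hd2 : (2:ℝ) ≤ d := by exact_mod_cast h1
      have hhalf : (d:ℝ)/2 ≤ c := by
        have := hc.1; linarith
      have h1' : c^p ≤ ((d:ℝ)/2)^p :=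
        Real.rpow_le_rpow_of_nonpos (by linarith) hhalf h0.le
      have h2' : ((d:ℝ)/2)^p = (d:ℝ)^p * (2:ℝ)^(-p) := by
        rw [Real.div_rpow (by linarith) (by norm_num), Real.rpow_neg (by norm_num)]
        ring
      rw [h2'] at h1'
      unfold Kc; nlinarith

lemma sum_rpow_le (p : ℝ) (hp : 0 < p+1) (hp0 : p ≤ 0) (l : ℕ) :
    (p+1) * ∑ d ∈ Icc 1 l, (d:ℝ)^p ≤ (l:ℝ)^(p+1) := by
  induction l with
  | zero => simp [Real.zero_rpow hp.ne']
  | succ l ih =>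
      rw [Finset.sum_Icc_succ_top (by omega)]
      have := step_lower p hp hp0 (l+1) (by omega)
      push_cast at this ⊢
      rw [show ((l:ℝ)+1)-1 = (l:ℝ) by ring] at this
      rw [mul_add]
      linarith

lemma sum_rpow_ge (p : ℝ) (hp : 0 < p+1) (l : ℕ) :
    (l:ℝ)^(p+1) ≤ Kc p * ∑ d ∈ Icc 1 l, (d:ℝ)^p := by
  induction l with
  | zero => simp [Real.zero_rpow hp.ne']
  | succ l ih =>
      rw [Finset.sum_Icc_succ_top (by omega)]
      have := step_upper p hp (l+1) (by omega)
      push_cast at this ⊢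
      rw [show ((l:ℝ)+1)-1 = (l:ℝ) by ring] at this
      rw [mul_add]
      linarith

lemma D_bounds_s19 (φ s : ℝ) (hφ₁ : 0 ≤ φ) (hφ₂ : φ < 1) (hs0 : 0 ≤ s)
    (l : ℕ) (hl : 1 ≤ l) :
    (1-φ)/Kc (s-φ) * (l:ℝ)^s ≤ (Zphi φ l)⁻¹ * ∑ d ∈ Icc 1 l, (d:ℝ)^(s-φ) ∧
    (Zphi φ l)⁻¹ * ∑ d ∈ Icc 1 l, (d:ℝ)^(s-φ) ≤ (l:ℝ)^s := by
  have hl0 : (0:ℝ) < l := by exact_mod_cast hl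
  set Zl := Zphi φ l with hZdef
  set S := ∑ d ∈ Icc 1 l, (d:ℝ)^(s-φ) with hSdef
  have hZpos : 0 < Zl := by
    rw [hZdef]; unfold Zphi
    apply Finset.sum_pos
    · intro m hm
      have : 1 ≤ m := (Finset.mem_Icc.mp hm).1
      exact Real.rpow_pos_of_pos (by exact_mod_cast this : (0:ℝ) < m) _
    · exact ⟨1, Finset.mem_Icc.mpr ⟨le_refl 1, hl⟩⟩
  have hK : 1 < Kc (s-φ) := Kc_pos _ (by linarith)
  have hlsnn : (0:ℝ) ≤ (l:ℝ)^s := Real.rpow_nonneg hl0.le _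
  have hZle : (1-φ) * Zl ≤ (l:ℝ)^(1-φ) := by
    have := sum_rpow_le (-φ) (by linarith) (by linarith) l
    rw [show -φ+1 = 1-φ by ring] at this
    rw [hZdef]; unfold Zphi; linarith
  have hSge : (l:ℝ)^s * (l:ℝ)^(1-φ) ≤ Kc (s-φ) * S := by
    have := sum_rpow_ge (s-φ) (by linarith) l
    rwa [show (s-φ)+1 = s+(1-φ) by ring, Real.rpow_add hl0] at this
  have hSle : S ≤ (l:ℝ)^s * Zl := by
    rw [hZdef]; unfold Zphi; rw [Finset.mul_sum, hSdef]
    apply Finset.sum_le_sum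
    intro d hd
    have hd1 : 1 ≤ d := (Finset.mem_Icc.mp hd).1
    have hdl : d ≤ l := (Finset.mem_Icc.mp hd).2
    have hd0 : (0:ℝ) < d := by exact_mod_cast hd1
    rw [show s-φ = s + (-φ) by ring, Real.rpow_add hd0]
    have h1 : (d:ℝ)^s ≤ (l:ℝ)^s :=
      Real.rpow_le_rpow hd0.le (by exact_mod_cast hdl) hs0
    exact mul_le_mul_of_nonneg_right h1 (Real.rpow_nonneg hd0.le _)
  constructor
  · have key : (1-φ) * ((l:ℝ)^s * Zl) ≤ Kc (s-φ) * S := by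
      calc (1-φ) * ((l:ℝ)^s * Zl) = (l:ℝ)^s * ((1-φ)*Zl) := by ring
        _ ≤ (l:ℝ)^s * (l:ℝ)^(1-φ) := mul_le_mul_of_nonneg_left hZle hlsnn
        _ ≤ Kc (s-φ) * S := hSge
    have hfinal : (1-φ)/Kc (s-φ) * (l:ℝ)^s * Zl ≤ S := by
      rw [div_mul_eq_mul_div, div_mul_eq_mul_div,
        div_le_iff₀ (by linarith : (0:ℝ) < Kc (s-φ))]
      linarith [key]
    calc (1-φ)/Kc (s-φ) * (l:ℝ)^s
        = Zl⁻¹ * ((1-φ)/Kc (s-φ) * (l:ℝ)^s * Zl) := by field_simp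
      _ ≤ Zl⁻¹ * S := mul_le_mul_of_nonneg_left hfinal (inv_nonneg.mpr hZpos.le)
  · calc Zl⁻¹ * S ≤ Zl⁻¹ * ((l:ℝ)^s * Zl) :=
        mul_le_mul_of_nonneg_left hSle (inv_nonneg.mpr hZpos.le)
      _ = (l:ℝ)^s := by field_simp

lemma D1_bounds (φ : ℝ) (hφ₁ : 0 ≤ φ) (hφ₂ : φ < 1) (l : ℕ) (hl : 1 ≤ l) :
    (1-φ)/Kc (1-φ) * (l:ℝ) ≤ D1 φ l ∧ D1 φ l ≤ (l:ℝ) := by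
  have := D_bounds_s19 φ 1 hφ₁ hφ₂ (by norm_num) l hl
  rw [Real.rpow_one] at this
  exact this

lemma Dhalf_bounds (φ : ℝ) (hφ₁ : 0 ≤ φ) (hφ₂ : φ < 1) (l : ℕ) (hl : 1 ≤ l) :
    (1-φ)/Kc (1/2-φ) * (l:ℝ)^((1:ℝ)/2) ≤ Dhalf φ l ∧
      Dhalf φ l ≤ (l:ℝ)^((1:ℝ)/2) := by
  exact D_bounds_s19 φ (1/2) hφ₁ hφ₂ (by norm_num) l hl

lemma Z_nonneg (γ : ℝ) (n : ℕ) : 0 ≤ Z γ n :=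
  Finset.sum_nonneg fun j _ => Real.rpow_nonneg (Nat.cast_nonneg j) _

lemma nz_nonneg (γ : ℝ) (n : ℕ) : 0 ≤ (n:ℝ) * (Z γ n)⁻¹ :=
  mul_nonneg (Nat.cast_nonneg n) (inv_nonneg.mpr (Z_nonneg γ n))

lemma W_bounds (γ φ : ℝ) (hφ₁ : 0 ≤ φ) (hφ₂ : φ < 1) (n : ℕ) :
    (1-φ)/Kc (1-φ) * Q γ n ≤ W γ φ n ∧ W γ φ n ≤ Q γ n := by
  set c := (1-φ)/Kc (1-φ) with hc
  have hsum : ∀ l ∈ Icc 1 (n-1), c * (l:ℝ)^(1-γ) ≤ (l:ℝ)^(-γ) * D1 φ l ∧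
      (l:ℝ)^(-γ) * D1 φ l ≤ (l:ℝ)^(1-γ) := by
    intro l hlm
    have hl : 1 ≤ l := (Finset.mem_Icc.mp hlm).1
    have hl0 : (0:ℝ) < l := by exact_mod_cast hl
    have hD := D1_bounds φ hφ₁ hφ₂ l hl
    have hexp : (l:ℝ)^(1-γ) = (l:ℝ)^(-γ) * (l:ℝ) := by
      rw [show (1:ℝ)-γ = -γ+1 by ring, Real.rpow_add hl0, Real.rpow_one]
    have hpos : (0:ℝ) ≤ (l:ℝ)^(-γ) := Real.rpow_nonneg hl0.le _
    constructor
    · rw [hexp]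
      calc c * ((l:ℝ)^(-γ) * (l:ℝ)) = (l:ℝ)^(-γ) * (c * (l:ℝ)) := by ring
        _ ≤ (l:ℝ)^(-γ) * D1 φ l := mul_le_mul_of_nonneg_left hD.1 hpos
    · rw [hexp]
      exact mul_le_mul_of_nonneg_left hD.2 hpos
  have h1 : c * ∑ l ∈ Icc 1 (n-1), (l:ℝ)^(1-γ) ≤
      ∑ l ∈ Icc 1 (n-1), (l:ℝ)^(-γ) * D1 φ l := by
    rw [Finset.mul_sum]
    exact Finset.sum_le_sum fun l hl => (hsum l hl).1
  have h2 : ∑ l ∈ Icc 1 (n-1), (l:ℝ)^(-γ) * D1 φ l ≤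
      ∑ l ∈ Icc 1 (n-1), (l:ℝ)^(1-γ) :=
    Finset.sum_le_sum fun l hl => (hsum l hl).2
  have hnz := nz_nonneg γ n
  constructor
  · unfold W Q
    calc c * ((n:ℝ) * (Z γ n)⁻¹ * ∑ l ∈ Icc 1 (n-1), (l:ℝ)^(1-γ))
        = (n:ℝ) * (Z γ n)⁻¹ * (c * ∑ l ∈ Icc 1 (n-1), (l:ℝ)^(1-γ)) := by ring
      _ ≤ (n:ℝ) * (Z γ n)⁻¹ * ∑ l ∈ Icc 1 (n-1), (l:ℝ)^(-γ) * D1 φ l :=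
        mul_le_mul_of_nonneg_left h1 hnz
  · unfold W Q
    exact mul_le_mul_of_nonneg_left h2 hnz

lemma M_bounds (γ φ : ℝ) (hφ₁ : 0 ≤ φ) (hφ₂ : φ < 1) (n : ℕ) :
    (1-φ)/Kc (1/2-φ) * A γ n ≤ M γ φ n ∧ M γ φ n ≤ A γ n := by
  set c := (1-φ)/Kc (1/2-φ) with hc
  have hsum : ∀ l ∈ Icc 1 (n-1), c * (l:ℝ)^(1/2-γ) ≤ (l:ℝ)^(-γ) * Dhalf φ l ∧
      (l:ℝ)^(-γ) * Dhalf φ l ≤ (l:ℝ)^(1/2-γ) := by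
    intro l hlm
    have hl : 1 ≤ l := (Finset.mem_Icc.mp hlm).1
    have hl0 : (0:ℝ) < l := by exact_mod_cast hl
    have hD := Dhalf_bounds φ hφ₁ hφ₂ l hl
    have hexp : (l:ℝ)^(1/2-γ) = (l:ℝ)^(-γ) * (l:ℝ)^((1:ℝ)/2) := by
      rw [show (1:ℝ)/2-γ = -γ+1/2 by ring, Real.rpow_add hl0]
    have hpos : (0:ℝ) ≤ (l:ℝ)^(-γ) := Real.rpow_nonneg hl0.le _
    constructor
    · rw [hexp]
      calc c * ((l:ℝ)^(-γ) * (l:ℝ)^((1:ℝ)/2))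
          = (l:ℝ)^(-γ) * (c * (l:ℝ)^((1:ℝ)/2)) := by ring
        _ ≤ (l:ℝ)^(-γ) * Dhalf φ l := mul_le_mul_of_nonneg_left hD.1 hpos
    · rw [hexp]
      exact mul_le_mul_of_nonneg_left hD.2 hpos
  have h1 : c * ∑ l ∈ Icc 1 (n-1), (l:ℝ)^(1/2-γ) ≤
      ∑ l ∈ Icc 1 (n-1), (l:ℝ)^(-γ) * Dhalf φ l := by
    rw [Finset.mul_sum]
    exact Finset.sum_le_sum fun l hl => (hsum l hl).1
  have h2 : ∑ l ∈ Icc 1 (n-1), (l:ℝ)^(-γ) * Dhalf φ l ≤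
      ∑ l ∈ Icc 1 (n-1), (l:ℝ)^(1/2-γ) :=
    Finset.sum_le_sum fun l hl => (hsum l hl).2
  have hnz := nz_nonneg γ n
  constructor
  · unfold M A
    calc c * ((n:ℝ) * (Z γ n)⁻¹ * ∑ l ∈ Icc 1 (n-1), (l:ℝ)^(1/2-γ))
        = (n:ℝ) * (Z γ n)⁻¹ * (c * ∑ l ∈ Icc 1 (n-1), (l:ℝ)^(1/2-γ)) := by ring
      _ ≤ (n:ℝ) * (Z γ n)⁻¹ * ∑ l ∈ Icc 1 (n-1), (l:ℝ)^(-γ) * Dhalf φ l :=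
        mul_le_mul_of_nonneg_left h1 hnz
  · unfold M A
    exact mul_le_mul_of_nonneg_left h2 hnz

lemma g_nonneg (β : ℝ) (n : ℕ) (hn : 1 ≤ n) : 0 ≤ g β n := by
  have h1 : (1:ℝ) ≤ n := by exact_mod_cast hn
  unfold g
  split_ifs
  · norm_num
  · exact Real.log_nonneg h1
  · exact Real.rpow_nonneg (by linarith) _
  · exact Real.sqrt_nonneg _
  · exact Real.sqrt_nonneg _

lemma A_nonneg (γ : ℝ) (n : ℕ) : 0 ≤ A γ n :=
  mul_nonneg (nz_nonneg γ n)
    (Finset.sum_nonneg fun l _ => Real.rpow_nonneg (Nat.cast_nonneg l) _)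

lemma Q_nonneg (γ : ℝ) (n : ℕ) : 0 ≤ Q γ n :=
  mul_nonneg (nz_nonneg γ n)
    (Finset.sum_nonneg fun l _ => Real.rpow_nonneg (Nat.cast_nonneg l) _)

end Helpers

theorem social_multicast_matches_broadcast_order (γ β φ : ℝ) (hγ : 0 ≤ γ) (hβ : 0 ≤ β)
    (hφ₁ : 0 ≤ φ) (hφ₂ : φ < 1) :
    ∃ c₁ c₂ : ℝ, 0 < c₁ ∧ c₁ ≤ c₂ ∧ ∃ N₀ : ℕ, ∀ n : ℕ, N₀ ≤ n →
      c₁ * (g β n * A γ n + Q γ n) ≤ g β n * M γ φ n + W γ φ n ∧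
      g β n * M γ φ n + W γ φ n ≤ c₂ * (g β n * A γ n + Q γ n) := by
  set c₀ := (1-φ)/Kc (1-φ) with hc₀
  set c₀' := (1-φ)/Kc (1/2-φ) with hc₀'
  have hK1 : 1 < Kc (1-φ) := Kc_pos _ (by linarith)
  have hK2 : 1 < Kc (1/2-φ) := Kc_pos _ (by linarith)
  have hc₀pos : 0 < c₀ := div_pos (by linarith) (by linarith)
  have hc₀'pos : 0 < c₀' := div_pos (by linarith) (by linarith)
  have hc₀le : c₀ ≤ 1 := by
    rw [hc₀, div_le_one (by linarith)]; linarith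
  refine ⟨min c₀ c₀', 1, lt_min hc₀pos hc₀'pos, le_trans (min_le_left _ _) hc₀le, 1, ?_⟩
  intro n hn
  have hg := g_nonneg β n hn
  have hA := A_nonneg γ n
  have hQ := Q_nonneg γ n
  have hW := W_bounds γ φ hφ₁ hφ₂ n
  have hM := M_bounds γ φ hφ₁ hφ₂ n
  have hgA : 0 ≤ g β n * A γ n := mul_nonneg hg hA
  constructor
  · have e1 : min c₀ c₀' * (g β n * A γ n) ≤ g β n * M γ φ n :=
      calc min c₀ c₀' * (g β n * A γ n) ≤ c₀' * (g β n * A γ n) :=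
            mul_le_mul_of_nonneg_right (min_le_right _ _) hgA
        _ = g β n * (c₀' * A γ n) := by ring
        _ ≤ g β n * M γ φ n := mul_le_mul_of_nonneg_left hM.1 hg
    have e2 : min c₀ c₀' * Q γ n ≤ W γ φ n :=
      calc min c₀ c₀' * Q γ n ≤ c₀ * Q γ n :=
            mul_le_mul_of_nonneg_right (min_le_left _ _) hQ
        _ ≤ W γ φ n := hW.1
    calc min c₀ c₀' * (g β n * A γ n + Q γ n)
        = min c₀ c₀' * (g β n * A γ n) + min c₀ c₀' * Q γ n := by ring
      _ ≤ g β n * M γ φ n + W γ φ n := add_le_add e1 e2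
  · have e1 : g β n * M γ φ n ≤ g β n * A γ n :=
      mul_le_mul_of_nonneg_left hM.2 hg
    rw [one_mul]
    linarith [hW.2]
end
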